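/- arXiv:1101.1516 — 4 statements merged into one kernel-verified Lean document; each statement's English description precedes it below -/
import Mathlib

section
/- Let F : ℕ → K be a sequence of nonzero elements of a field K of characteristic zero, and define the F-binomial coefficient C_F(n,k) = (F_n · F_{n-1} ⋯ F_{n-k+1}) / (F_k · F_{k-1} ⋯ F_1) for k ≤ n. Let g1, g2 : ℕ × ℕ → K. If F_{r+s} = g1(r,s) · F_r + g2(r,s) · F_s holds for all r, s ≥ 1, then for all r, s ≥ 1: C_F(r+s, r) = g1(r,s) · C_F(r+s-1, r-1) + g2(r,s) · C_F(r+s-1, r). -/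
theorem F_binomial_recurrence {K : Type*} [Field K] [CharZero K]
    (F : ℕ → K) (hF : ∀ m, 1 ≤ m → F m ≠ 0)
    (Ffact : ℕ → K) (hfact : ∀ n, Ffact n = ∏ i ∈ Finset.range n, F (i + 1))
    (C : ℕ → ℕ → K) (hC : ∀ n k, k ≤ n → C n k = Ffact n / (Ffact k * Ffact (n - k)))
    (g1 g2 : ℕ × ℕ → K)
    (hadd : ∀ r s : ℕ, 1 ≤ r → 1 ≤ s → F (r + s) = g1 (r, s) * F r + g2 (r, s) * F s) :
    ∀ r s : ℕ, 1 ≤ r → 1 ≤ s →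
      C (r + s) r = g1 (r, s) * C (r + s - 1) (r - 1) + g2 (r, s) * C (r + s - 1) r := by
  have hne : ∀ n, Ffact n ≠ 0 := by
    intro n
    rw [hfact]
    exact Finset.prod_ne_zero_iff.mpr fun i _ => hF (i + 1) (Nat.le_add_left 1 i)
  have hstep : ∀ n, Ffact (n + 1) = Ffact n * F (n + 1) := by
    intro n
    rw [hfact, hfact, Finset.prod_range_succ]
  rintro (_ | r) (_ | s) hr hs
  · omega
  · omega
  · omega
  have e1 : r + 1 + (s + 1) = r + s + 2 := by ring
  have e2 : r + 1 + (s + 1) - 1 = r + s + 1 := by omega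
  rw [e1, show r + s + 2 - 1 = r + s + 1 from rfl, hC _ _ (by omega), hC _ _ (by omega), hC _ _ (by omega)]
  have e3 : r + s + 2 - (r + 1) = s + 1 := by omega
  have e4 : r + 1 - 1 = r := by omega
  have e5 : r + s + 1 - r = s + 1 := by omega
  have e6 : r + s + 1 - (r + 1) = s := by omega
  rw [e3, e4, e5, e6]
  have hF2 := hadd (r + 1) (s + 1) (by omega) (by omega)
  have h1 : r + 1 + (s + 1) = r + s + 1 + 1 := by ring
  rw [h1] at hF2
  rw [hstep (r + s + 1), hstep r, hstep s, hF2]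
  have := hne r
  have := hne s
  have := hne (r + s + 1)
  have := hF (r + 1) (by omega)
  have := hF (s + 1) (by omega)
  field_simp
end

section
/- Let F : ℕ → K be a sequence of nonzero elements of a field K of characteristic zero with F-binomial coefficients C_F(n,k) = F_n!/(F_k!·F_{n-k}!). Then for all r ≥ 1 and s ≥ 1: C_F(r+s, r) = C_F(r+s-1, r-1) + ((F_{r+s} - F_r)/F_s) · C_F(r+s-1, r). -/
theorem fontene_recurrence {K : Type*} [Field K] [CharZero K]
    (F : ℕ → K) (hF : ∀ m, 1 ≤ m → F m ≠ 0)
    (Ffact : ℕ → K) (hfact : ∀ n, Ffact n = ∏ i ∈ Finset.range n, F (i + 1))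
    (C : ℕ → ℕ → K) (hC : ∀ n k, k ≤ n → C n k = Ffact n / (Ffact k * Ffact (n - k))) :
    ∀ r s : ℕ, 1 ≤ r → 1 ≤ s →
      C (r + s) r = C (r + s - 1) (r - 1) + ((F (r + s) - F r) / F s) * C (r + s - 1) r := by
  have hFfne : ∀ n, Ffact n ≠ 0 := by
    intro n
    rw [hfact]
    exact Finset.prod_ne_zero_iff.mpr fun i _ => hF _ (Nat.le_add_left 1 i)
  have hsucc : ∀ n, Ffact (n + 1) = Ffact n * F (n + 1) := by
    intro n
    rw [hfact, hfact, Finset.prod_range_succ]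
  rintro (_ | a) (_ | b) hr hs
  · omega
  · omega
  · omega
  have e1 : a + 1 + (b + 1) = a + b + 1 + 1 := by ring
  have e2 : a + 1 + (b + 1) - (a + 1) = b + 1 := by omega
  have e3 : a + 1 + (b + 1) - 1 = a + b + 1 := by omega
  have e4 : a + b + 1 - a = b + 1 := by omega
  have e5 : a + b + 1 - (a + 1) = b := by omega
  have e6 : a + 1 - 1 = a := by omega
  rw [hC _ _ (by omega), hC _ _ (by omega), hC _ _ (by omega), e6, e2, e3, e4, e5, e1,
    hsucc (a + b + 1), hsucc a, hsucc b, hsucc (a + b)]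
  have h1 := hFfne a
  have h2 := hFfne b
  have h3 := hFfne (a + b)
  have h4 := hF (a + 1) (by omega)
  have h5 := hF (b + 1) (by omega)
  have h6 := hF (a + b + 1) (by omega)
  have h7 := hF (a + b + 1 + 1) (by omega)
  field_simp
  ring
end

section
/- Let p, q be distinct complex numbers with Δ = (p-q)^2, U_n = (p^n - q^n)/(p-q), V_n = p^n + q^n, all nonzero for n ≥ 1. With mixed binomials M(r,k) = V_{r+k}!/(V_r!·U_k!) (factorials as descending products, index-0 factorial = 1), for all r ≥ 1 and k ≥ 1: 2·M(r,k) = V_k · M(r-1, k) + Δ·U_r · M(r, k-1). -/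
theorem mixed_VU_binomial_recurrence_two (p q : ℂ) (hpq : p ≠ q)
    (Δ : ℂ) (hΔ : Δ = (p - q) ^ 2)
    (U V : ℕ → ℂ) (hU : ∀ n, U n = (p ^ n - q ^ n) / (p - q))
    (hV : ∀ n, V n = p ^ n + q ^ n)
    (hUne : ∀ m, 1 ≤ m → U m ≠ 0) (hVne : ∀ m, 1 ≤ m → V m ≠ 0)
    (Ufact Vfact : ℕ → ℂ)
    (hUfact : ∀ m, Ufact m = ∏ i ∈ Finset.range m, U (i + 1))
    (hVfact : ∀ m, Vfact m = ∏ i ∈ Finset.range m, V (i + 1))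
    (M : ℕ → ℕ → ℂ) (hM : ∀ r k, M r k = Vfact (r + k) / (Vfact r * Ufact k)) :
    ∀ r k : ℕ, 1 ≤ r → 1 ≤ k →
      2 * M r k = V k * M (r - 1) k + Δ * U r * M r (k - 1) := by
  have hpq' : p - q ≠ 0 := sub_ne_zero.mpr hpq
  have hVfne : ∀ m, Vfact m ≠ 0 := by
    intro m
    rw [hVfact]
    exact Finset.prod_ne_zero_iff.mpr fun i _ => hVne _ (Nat.le_add_left 1 i)
  have hUfne : ∀ m, Ufact m ≠ 0 := by
    intro m
    rw [hUfact]
    exact Finset.prod_ne_zero_iff.mpr fun i _ => hUne _ (Nat.le_add_left 1 i)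
  have hVstep : ∀ m, Vfact (m + 1) = Vfact m * V (m + 1) := by
    intro m; rw [hVfact, hVfact, Finset.prod_range_succ]
  have hUstep : ∀ m, Ufact (m + 1) = Ufact m * U (m + 1) := by
    intro m; rw [hUfact, hUfact, Finset.prod_range_succ]
  have key : ∀ a b : ℕ, 2 * V (a + b) = V a * V b + Δ * U a * U b := by
    intro a b
    rw [hV, hV, hV, hU, hU, hΔ, pow_add]
    field_simp
    ring
  rintro r k hr hk
  obtain ⟨a, rfl⟩ := Nat.exists_eq_add_of_le hr
  obtain ⟨b, rfl⟩ := Nat.exists_eq_add_of_le hk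
  simp only [Nat.add_sub_cancel_left, Nat.add_sub_cancel]
  rw [hM, hM, hM]
  have e1 : 1 + a + (1 + b) = (a + b + 1) + 1 := by ring
  have e2 : a + (1 + b) = (a + b) + 1 := by ring
  have e3 : 1 + a + b = (a + b) + 1 := by ring
  have e4 : 1 + a = a + 1 := by ring
  have e5 : 1 + b = b + 1 := by ring
  rw [e1, e2, e3, e4, e5, hVstep (a + b + 1), hVstep (a + b), hVstep a, hUstep b]
  have hk2 := key (a + 1) (b + 1)
  have hab : a + 1 + (b + 1) = a + b + 1 + 1 := by ring
  rw [hab] at hk2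
  have h1 := hVfne a
  have h2 := hVfne (a + b)
  have h3 := hUfne b
  have h4 := hVne (a + 1) (Nat.le_add_left 1 a)
  have h5 := hUne (b + 1) (Nat.le_add_left 1 b)
  field_simp
  linear_combination (V (a + b + 1)) * hk2
end

section
/- Let s, t be commuting indeterminates (or elements of a commutative ring) and U the fundamental Lucas sequence U_0 = 0, U_1 = 1, U_{n+2} = s·U_{n+1} + t·U_n. Then for all n ≥ 1 and 1 ≤ k ≤ n-1, the identity U_n = U_{k+1}·U_{n-k} + t·U_k·U_{n-k-1} holds; consequently, by induction, the U-binomial coefficients C_U(n,k) (defined when all U_m are nonzero, over the field of fractions) lie in the subring ℤ[s,t]. -/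
theorem U_addition_and_binomial_integrality {K : Type*} [Field K] [CharZero K]
    (s t : K) (U : ℕ → K) (h0 : U 0 = 0) (h1 : U 1 = 1)
    (hrec : ∀ n, U (n + 2) = s * U (n + 1) + t * U n) :
    (∀ n k : ℕ, 1 ≤ n → 1 ≤ k → k ≤ n - 1 →
      U n = U (k + 1) * U (n - k) + t * U k * U (n - k - 1)) ∧
    (∀ (_ : ∀ m, 1 ≤ m → U m ≠ 0) (n k : ℕ), k ≤ n →
      (∏ i ∈ Finset.range n, U (i + 1)) /
          ((∏ i ∈ Finset.range k, U (i + 1)) * ∏ i ∈ Finset.range (n - k), U (i + 1)) ∈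
        Subring.closure {s, t}) := by
  have h2 : U 2 = s := by rw [hrec 0, h0, h1]; ring
  have hadd : ∀ k m, U (k + m + 1) = U (k + 1) * U (m + 1) + t * U k * U m := by
    intro k
    induction k using Nat.twoStepInduction with
    | zero => intro m; simp [h0, h1]
    | one =>
      intro m
      have := hrec m
      simp only [show 1 + m + 1 = m + 2 from by omega]
      rw [this, h2, h1]; ring
    | more k ih ih' =>
      intro m
      have e1 := ih m
      have e2 := ih' m
      have r1 := hrec (k + m + 1)
      simp only [show k + 1 + m + 1 = k + m + 2 from by omega] at e2
      simp only [show k + m + 1 + 2 = k + m + 3 from by omega] at r1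
      simp only [show k + 2 + m + 1 = k + m + 3 from by omega]
      rw [r1, e1, e2, show k + 2 + 1 = k + 1 + 2 from by omega, hrec (k + 1), hrec k]
      ring
  constructor
  · intro n k hn hk hkn
    obtain ⟨m, rfl⟩ : ∃ m, n = k + m + 1 := ⟨n - k - 1, by omega⟩
    simp only [show k + m + 1 - k = m + 1 from by omega,
      show k + m + 1 - k - 1 = m from by omega]
    exact hadd k m
  · intro hne n k hkn
    have hs : s ∈ Subring.closure ({s, t} : Set K) := Subring.subset_closure (by simp)
    have ht : t ∈ Subring.closure ({s, t} : Set K) := Subring.subset_closure (by simp)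
    have hUm : ∀ m, U m ∈ Subring.closure ({s, t} : Set K) := by
      intro m
      induction m using Nat.twoStepInduction with
      | zero => rw [h0]; exact zero_mem _
      | one => rw [h1]; exact one_mem _
      | more m ih ih' => rw [hrec m]; exact add_mem (mul_mem hs ih') (mul_mem ht ih)
    have hFne : ∀ m, (∏ i ∈ Finset.range m, U (i + 1)) ≠ 0 := fun m =>
      Finset.prod_ne_zero_iff.mpr (fun i _ => hne (i + 1) (by omega))
    induction n generalizing k with
    | zero =>
      obtain rfl : k = 0 := by omega
      simp only [Finset.prod_range_zero, Nat.sub_zero, one_mul, div_one]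
      exact one_mem _
    | succ n ih =>
      rcases Nat.eq_zero_or_pos k with rfl | hk1
      · simp only [Finset.prod_range_zero, Nat.sub_zero, one_mul]
        rw [div_self (hFne (n + 1))]
        exact one_mem _
      rcases eq_or_lt_of_le hkn with rfl | hklt
      · simp only [Nat.sub_self, Finset.prod_range_zero, mul_one]
        rw [div_self (hFne (n + 1))]
        exact one_mem _
      obtain ⟨j, rfl⟩ : ∃ j, k = j + 1 := ⟨k - 1, by omega⟩
      obtain ⟨m, rfl⟩ : ∃ m, n = j + 1 + m := ⟨n - (j + 1), by omega⟩
      simp only [show j + 1 + m + 1 - (j + 1) = m + 1 from by omega]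
      have key : (∏ i ∈ Finset.range (j + 1 + m + 1), U (i + 1)) /
          ((∏ i ∈ Finset.range (j + 1), U (i + 1)) * ∏ i ∈ Finset.range (m + 1), U (i + 1)) =
          U (j + 2) * ((∏ i ∈ Finset.range (j + 1 + m), U (i + 1)) /
            ((∏ i ∈ Finset.range (j + 1), U (i + 1)) * ∏ i ∈ Finset.range m, U (i + 1))) +
          t * U m * ((∏ i ∈ Finset.range (j + 1 + m), U (i + 1)) /
            ((∏ i ∈ Finset.range j, U (i + 1)) * ∏ i ∈ Finset.range (m + 1), U (i + 1))) := by
        rw [show j + 1 + m + 1 = (j + 1 + m) + 1 from rfl, Finset.prod_range_succ,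
          Finset.prod_range_succ (fun i => U (i + 1)) j,
          Finset.prod_range_succ (fun i => U (i + 1)) m]
        have haddkey := hadd (j + 1) m
        have hUj : U (j + 1) ≠ 0 := hne _ (by omega)
        have hUk2 : U (m + 1) ≠ 0 := hne _ (by omega)
        field_simp [hFne j, hFne m, hFne (j + 1 + m), hUj, hUk2]
        rw [haddkey]
        ring
      rw [key]
      have ih1 := ih (j + 1) (by omega)
      have ih2 := ih j (by omega)
      simp only [show j + 1 + m - (j + 1) = m from by omega,
        show j + 1 + m - j = m + 1 from by omega] at ih1 ih2
      exact add_mem (mul_mem (hUm _) ih1) (mul_mem (mul_mem ht (hUm m)) ih2)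
end
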